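/- Let R = ℤ[x,x⁻¹], let A be an n×n matrix with integer entries, and let M_A be the direct limit of the sequence ℤⁿ → ℤⁿ → ⋯ with all maps multiplication by Aᵀ, regarded as an R-module with x acting by the automorphism induced by Aᵀ. Then the R-linear map Rⁿ → Rⁿ given by the matrix x·Iₙ − Aᵀ is injective, and its cokernel is isomorphic to M_A as an R-module; in particular M_A admits a projective resolution of length one over R. -/

import Mathlib

/-!
STATEMENT 11: Let R = ℤ[x,x⁻¹], let A be an n×n integer matrix, and let M_A be the direct
limit of ℤⁿ → ℤⁿ → ⋯ with all maps multiplication by Aᵀ, regarded as an R-module with x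
acting by the automorphism T induced by Aᵀ. Then the R-linear map Rⁿ → Rⁿ given by the
matrix x·Iₙ − Aᵀ is injective, and its cokernel is isomorphic to M_A as an R-module
(i.e., there is an additive isomorphism intertwining the action of x with T); in particular
M_A admits a projective resolution of length one over R.
-/

noncomputable section

/-- The ℕ-indexed direct system with all terms `ℤⁿ` and all transition maps given by
multiplication by `Aᵀ`. -/
def matSystem (n : ℕ) (A : Matrix (Fin n) (Fin n) ℤ) :
    ∀ i j : ℕ, i ≤ j → (Fin n → ℤ) →ₗ[ℤ] (Fin n → ℤ) :=
  fun i j _ => ((Matrix.toLin' A.transpose : Module.End ℤ (Fin n → ℤ)) ^ (j - i) :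
    Module.End ℤ (Fin n → ℤ))

/-- The matrix `x·Iₙ − Aᵀ` over `R = ℤ[x,x⁻¹]`. -/
def charMat (n : ℕ) (A : Matrix (Fin n) (Fin n) ℤ) :
    Matrix (Fin n) (Fin n) (LaurentPolynomial ℤ) :=
  (LaurentPolynomial.T 1 : LaurentPolynomial ℤ) • (1 : Matrix (Fin n) (Fin n) (LaurentPolynomial ℤ)) -
    A.transpose.map (algebraMap ℤ (LaurentPolynomial ℤ))

/-!
Over `R = ℤ[x,x⁻¹]` the determinant of `x·I − Aᵀ` is the image of the monic characteristic
polynomial of `Aᵀ`, hence a non-zero-divisor, so `x·I − Aᵀ` is injective. In its cokernel the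
columns give the relation `x·[v] = [Aᵀ v]` for integral vectors `v`, so `ofᵢ v ↦ [x⁻ⁱ v]` is
compatible with the transition maps and defines a map `M_A → coker` commuting with `x`, hence
`R`-linear. Conversely `Aᵀ` induces an automorphism of `M_A` (its inverse shifts the index), which
makes `M_A` an `R`-module, and `eⱼ ↦ of₀ eⱼ` kills the columns of `x·I − Aᵀ`. Both composites are
the identity on generators.
-/

open LaurentPolynomial
open scoped LaurentPolynomial nonZeroDivisors

theorem Pi.map_comp_single {ι F M N : Type*} [DecidableEq ι] [Zero M] [Zero N] [FunLike F M N]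
    [ZeroHomClass F M N] (f : F) (k : ι) (x : M) : f ∘ Pi.single k x = Pi.single k (f x) :=
  funext (Pi.apply_single (fun _ => f) (fun _ => map_zero f) k x)

theorem LaurentPolynomial.map_smul_of_map_T_one_smul {K P Q : Type*} [CommSemiring K]
    [AddCommMonoid P] [AddCommMonoid Q] [Module K[T;T⁻¹] P] [Module K[T;T⁻¹] Q] [Module K P]
    [Module K Q] [IsScalarTower K K[T;T⁻¹] P] [IsScalarTower K K[T;T⁻¹] Q] (g : P →ₗ[K] Q)
    (hg : ∀ p, g ((T 1 : K[T;T⁻¹]) • p) = (T 1 : K[T;T⁻¹]) • g p) (r : K[T;T⁻¹]) (p : P) :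
    g (r • p) = r • g p := by
  have hg_inv : ∀ p, g ((T (-1) : K[T;T⁻¹]) • p) = (T (-1) : K[T;T⁻¹]) • g p := fun p => by
    have h := hg ((T (-1) : K[T;T⁻¹]) • p)
    rw [smul_smul, ← T_add, add_neg_cancel, T_zero, one_smul] at h
    rw [h, smul_smul, ← T_add, neg_add_cancel, T_zero, one_smul]
  induction r using LaurentPolynomial.induction_on generalizing p with
  | h_C a => rw [C_eq_algebraMap, algebraMap_smul, algebraMap_smul, map_smul]
  | h_add hp hq => rw [add_smul, map_add, hp, hq, add_smul]
  | h_C_mul_T n a ih =>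
    have h : C a * T (n + 1) = T 1 * (C a * T n) := by rw [T_add]; ring
    rw [h, mul_smul, hg, ih, ← mul_smul]
  | h_C_mul_T_Z n a ih =>
    have h : C a * T (-n - 1) = T (-1) * (C a * T (-n)) := by
      rw [sub_eq_add_neg, T_add]; ring
    rw [h, mul_smul, hg_inv, ih, ← mul_smul]

namespace Matrix

variable {K ι : Type*} [CommRing K] [Fintype ι] [DecidableEq ι]

def laurentCharmatrix (B : Matrix ι ι K) : Matrix ι ι K[T;T⁻¹] :=
  (T 1 : K[T;T⁻¹]) • 1 - B.map (algebraMap K K[T;T⁻¹])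

theorem laurentCharmatrix_eq_map_charmatrix (B : Matrix ι ι K) :
    B.laurentCharmatrix = B.charmatrix.map Polynomial.toLaurent := by
  ext i j : 1
  rcases eq_or_ne i j with rfl | h <;> simp [laurentCharmatrix, *]

theorem det_laurentCharmatrix (B : Matrix ι ι K) :
    B.laurentCharmatrix.det = Polynomial.toLaurent B.charpoly := by
  rw [laurentCharmatrix_eq_map_charmatrix, charpoly, RingHom.map_det]
  rfl

theorem det_laurentCharmatrix_mem_nonZeroDivisors (B : Matrix ι ι K) :
    B.laurentCharmatrix.det ∈ K[T;T⁻¹]⁰ := by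
  rw [det_laurentCharmatrix, ← algebraMap_eq_toLaurent]
  exact IsLocalization.nonZeroDivisors_le_comap (Submonoid.powers (Polynomial.X : Polynomial K))
    K[T;T⁻¹] B.charpoly_monic.mem_nonZeroDivisors

theorem laurentCharmatrix_mulVec_injective (B : Matrix ι ι K) :
    Function.Injective B.laurentCharmatrix.mulVec :=
  mulVec_injective_of_det_mem_nonZeroDivisors B.det_laurentCharmatrix_mem_nonZeroDivisors

theorem laurentCharmatrix_mulVec_algebraMap_comp (B : Matrix ι ι K) (v : ι → K) :
    B.laurentCharmatrix *ᵥ (algebraMap K K[T;T⁻¹] ∘ v) =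
      (T 1 : K[T;T⁻¹]) • (algebraMap K K[T;T⁻¹] ∘ v) - algebraMap K K[T;T⁻¹] ∘ (B *ᵥ v) := by
  rw [laurentCharmatrix, sub_mulVec, smul_mulVec, one_mulVec]
  congr 1
  funext i
  exact (RingHom.map_mulVec _ _ _ _).symm

end Matrix

section IterateLimit

variable {K M : Type*} [CommSemiring K] [AddCommMonoid M] [Module K M]

abbrev IterateLimit (f : Module.End K M) :=
  Module.DirectLimit (fun _ : ℕ => M) (fun i j (_ : i ≤ j) => f ^ (j - i))

namespace IterateLimit

variable (f : Module.End K M)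

abbrev of (i : ℕ) : M →ₗ[K] IterateLimit f :=
  Module.DirectLimit.of K ℕ (fun _ => M) (fun i j _ => f ^ (j - i)) i

variable {f}

theorem of_pow_apply {i j : ℕ} (h : i ≤ j) (x : M) : of f j ((f ^ (j - i)) x) = of f i x :=
  Module.DirectLimit.of_f (hij := h)

theorem of_succ_apply (i : ℕ) (x : M) : of f (i + 1) (f x) = of f i x := by
  simpa using of_pow_apply (f := f) i.le_succ x

variable (f)

def aut : IterateLimit f ≃ₗ[K] IterateLimit f :=
  .ofLinearMap
    (Module.DirectLimit.map (fun _ => f) fun _ _ _ => (Commute.self_pow f _).eq)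
    (Module.DirectLimit.lift K ℕ _ _ (fun i => of f (i + 1)) fun i j h x => by
      simpa [Nat.add_sub_add_right] using of_pow_apply (f := f) (Nat.add_le_add_right h 1) x)
    (Module.DirectLimit.hom_ext fun i => LinearMap.ext fun x => by simp [of_succ_apply])
    (Module.DirectLimit.hom_ext fun i => LinearMap.ext fun x => by simp [of_succ_apply])

variable {f}

@[simp] theorem aut_of (i : ℕ) (x : M) : aut f (of f i x) = of f i (f x) := by
  simp [aut]

@[simp] theorem aut_symm_of (i : ℕ) (x : M) : (aut f).symm (of f i x) = of f (i + 1) x := by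
  simp [aut]

variable (f)

def laurentAction : K[T;T⁻¹] →ₐ[K] Module.End K (IterateLimit f) :=
  AddMonoidAlgebra.lift K _ ℤ <| (Units.coeHom _).comp <|
    zpowersHom _ ((LinearMap.GeneralLinearGroup.generalLinearEquiv K _).symm (aut f))

instance : Module K[T;T⁻¹] (IterateLimit f) := Module.compHom _ (laurentAction f).toRingHom

instance : IsScalarTower K K[T;T⁻¹] (IterateLimit f) where
  smul_assoc k r z := by
    show laurentAction f (k • r) z = k • laurentAction f r z
    rw [map_smul, LinearMap.smul_apply]

variable {f}

theorem T_one_smul (z : IterateLimit f) : (T 1 : K[T;T⁻¹]) • z = aut f z := by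
  show laurentAction f (T 1) z = _
  rw [laurentAction, T, AddMonoidAlgebra.lift_single, one_smul]
  rfl

theorem T_neg_one_smul (z : IterateLimit f) : (T (-1) : K[T;T⁻¹]) • z = (aut f).symm z := by
  show laurentAction f (T (-1)) z = _
  rw [laurentAction, T, AddMonoidAlgebra.lift_single, one_smul]
  rfl

theorem T_neg_smul_of_zero (i : ℕ) (x : M) : (T (-i) : K[T;T⁻¹]) • of f 0 x = of f i x := by
  induction i with
  | zero => simp
  | succ i ih =>
    rw [Nat.cast_succ, neg_add, T_add, mul_comm, mul_smul, ih, T_neg_one_smul, aut_symm_of]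

end IterateLimit

end IterateLimit

namespace Matrix

variable {K ι : Type*} [CommRing K] [Fintype ι] [DecidableEq ι] (B : Matrix ι ι K)

abbrev LaurentCokernel :=
  (ι → K[T;T⁻¹]) ⧸ LinearMap.range (toLin' B.laurentCharmatrix)

variable {B}

theorem mk_algebraMap_comp_mulVec (v : ι → K) :
    (Submodule.Quotient.mk (algebraMap K K[T;T⁻¹] ∘ (B *ᵥ v)) : B.LaurentCokernel) =
      (T 1 : K[T;T⁻¹]) • Submodule.Quotient.mk (algebraMap K K[T;T⁻¹] ∘ v) := by
  rw [← Submodule.Quotient.mk_smul, Submodule.Quotient.eq]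
  exact ⟨-(algebraMap K K[T;T⁻¹] ∘ v), by
    rw [map_neg, toLin'_apply, laurentCharmatrix_mulVec_algebraMap_comp, neg_sub]⟩

theorem mk_algebraMap_comp_pow_apply (k : ℕ) (v : ι → K) :
    (Submodule.Quotient.mk (algebraMap K K[T;T⁻¹] ∘ ((toLin' B ^ k) v)) : B.LaurentCokernel) =
      (T k : K[T;T⁻¹]) • Submodule.Quotient.mk (algebraMap K K[T;T⁻¹] ∘ v) := by
  induction k with
  | zero => simp
  | succ k ih =>
    rw [pow_succ', Module.End.mul_apply, toLin'_apply, mk_algebraMap_comp_mulVec, ih, smul_smul,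
      ← T_add, add_comm, Nat.cast_succ]

variable (B)

def limitToCokernel : IterateLimit (toLin' B) →ₗ[K] B.LaurentCokernel :=
  Module.DirectLimit.lift K ℕ _ _
    (fun i => ((T (-i) : K[T;T⁻¹]) • (LinearMap.range _).mkQ).restrictScalars K ∘ₗ
      (Algebra.linearMap K K[T;T⁻¹]).compLeft ι)
    fun i j h v => by
      change (T (-j) : K[T;T⁻¹]) •
          (Submodule.Quotient.mk (algebraMap K K[T;T⁻¹] ∘ (toLin' B ^ (j - i)) v) :
            B.LaurentCokernel) =
        (T (-i) : K[T;T⁻¹]) • Submodule.Quotient.mk (algebraMap K K[T;T⁻¹] ∘ v)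
      rw [mk_algebraMap_comp_pow_apply, smul_smul, ← T_add]
      congr
      omega

variable {B}

theorem limitToCokernel_of (i : ℕ) (v : ι → K) :
    limitToCokernel B (IterateLimit.of (toLin' B) i v) =
      (T (-i) : K[T;T⁻¹]) • Submodule.Quotient.mk (algebraMap K K[T;T⁻¹] ∘ v) :=
  Module.DirectLimit.lift_of ..

theorem limitToCokernel_T_one_smul (z : IterateLimit (toLin' B)) :
    limitToCokernel B ((T 1 : K[T;T⁻¹]) • z) = (T 1 : K[T;T⁻¹]) • limitToCokernel B z := by
  induction z using Module.DirectLimit.induction_on with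
  | ih i v =>
    rw [IterateLimit.T_one_smul, IterateLimit.aut_of, limitToCokernel_of, limitToCokernel_of,
      toLin'_apply, mk_algebraMap_comp_mulVec, smul_comm]

variable (B)

def freeToLimit : (ι → K[T;T⁻¹]) →ₗ[K[T;T⁻¹]] IterateLimit (toLin' B) :=
  Fintype.linearCombination K[T;T⁻¹] fun j => IterateLimit.of (toLin' B) 0 (Pi.single j 1)

variable {B}

theorem freeToLimit_algebraMap_comp (v : ι → K) :
    freeToLimit B (algebraMap K K[T;T⁻¹] ∘ v) = IterateLimit.of (toLin' B) 0 v := by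
  simp only [freeToLimit, Fintype.linearCombination_apply, Function.comp_apply, algebraMap_smul,
    ← map_smul, ← map_sum, ← pi_eq_sum_univ' v]

theorem freeToLimit_comp_toLin'_laurentCharmatrix :
    freeToLimit B ∘ₗ toLin' B.laurentCharmatrix = 0 := by
  ext k : 2
  simp only [LinearMap.comp_apply, LinearMap.single_apply, LinearMap.zero_apply]
  rw [← map_one (algebraMap K K[T;T⁻¹]), ← Pi.map_comp_single, toLin'_apply,
    laurentCharmatrix_mulVec_algebraMap_comp, map_sub, map_smul, freeToLimit_algebraMap_comp,
    freeToLimit_algebraMap_comp, IterateLimit.T_one_smul, IterateLimit.aut_of, toLin'_apply,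
    sub_self]

variable (B)

def cokernelToLimit : B.LaurentCokernel →ₗ[K[T;T⁻¹]] IterateLimit (toLin' B) :=
  (LinearMap.range _).liftQ (freeToLimit B)
    (LinearMap.range_le_ker_iff.mpr freeToLimit_comp_toLin'_laurentCharmatrix)

def cokernelEquivLimit : B.LaurentCokernel ≃ₗ[K[T;T⁻¹]] IterateLimit (toLin' B) :=
  .ofLinearMap (cokernelToLimit B)
    { toFun := limitToCokernel B
      map_add' := map_add _
      map_smul' := map_smul_of_map_T_one_smul _ limitToCokernel_T_one_smul }
    (LinearMap.ext fun z => Module.DirectLimit.induction_on z fun i v => by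
      simp only [LinearMap.comp_apply, LinearMap.coe_mk, AddHom.coe_mk, LinearMap.id_apply]
      rw [limitToCokernel_of, map_smul, cokernelToLimit, Submodule.liftQ_apply,
        freeToLimit_algebraMap_comp, IterateLimit.T_neg_smul_of_zero])
    (by
      ext j : 3
      change limitToCokernel B (freeToLimit B (Pi.single j 1)) =
        Submodule.Quotient.mk (Pi.single j 1)
      rw [freeToLimit, Fintype.linearCombination_apply_single, one_smul, limitToCokernel_of,
        Pi.map_comp_single, map_one, Nat.cast_zero, neg_zero, T_zero, one_smul])

end Matrix

theorem charMat_injective_and_cokernel_iso_directLimit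
    (n : ℕ) (A : Matrix (Fin n) (Fin n) ℤ) :
    Function.Injective (Matrix.toLin' (charMat n A)) ∧
    ∃ (T : Module.DirectLimit (fun _ : ℕ => Fin n → ℤ) (matSystem n A) →ₗ[ℤ]
          Module.DirectLimit (fun _ : ℕ => Fin n → ℤ) (matSystem n A))
      (ψ : ((Fin n → LaurentPolynomial ℤ) ⧸
          LinearMap.range (Matrix.toLin' (charMat n A))) ≃ₗ[ℤ]
        Module.DirectLimit (fun _ : ℕ => Fin n → ℤ) (matSystem n A)),
      -- `T` is the endomorphism induced by `Aᵀ`, and it is an automorphism: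
      (∀ (i : ℕ) (v : Fin n → ℤ),
        T (Module.DirectLimit.of ℤ ℕ (fun _ : ℕ => Fin n → ℤ) (matSystem n A) i v) =
          Module.DirectLimit.of ℤ ℕ (fun _ : ℕ => Fin n → ℤ) (matSystem n A) i
            (Matrix.toLin' A.transpose v)) ∧
      Function.Bijective T ∧
      -- `ψ` intertwines the action of `x` on the cokernel with `T`, so that it is an
      -- isomorphism of `R`-modules onto `M_A` with `x` acting by `T`:
      (∀ c : (Fin n → LaurentPolynomial ℤ) ⧸
          LinearMap.range (Matrix.toLin' (charMat n A)),
        ψ ((LaurentPolynomial.T 1 : LaurentPolynomial ℤ) • c) = T (ψ c)) := by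
  refine ⟨A.transpose.laurentCharmatrix_mulVec_injective,
    (IterateLimit.aut (Matrix.toLin' A.transpose)).toLinearMap,
    A.transpose.cokernelEquivLimit.restrictScalars ℤ, IterateLimit.aut_of,
    (IterateLimit.aut _).bijective, fun c => ?_⟩
  exact (A.transpose.cokernelEquivLimit.map_smul _ c).trans (IterateLimit.T_one_smul _)

end
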